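/- arXiv:2209.08983 — 3 statements merged into one kernel-verified Lean document; each statement's English description precedes it below -/
import Mathlib

section
/- Let R be a nonzero M×M positive semidefinite Hermitian matrix, σ² > 0, α₀ > 0, K ≥ 1. Then the equation τ = (α₀/K)·Tr{R(R·α₀/(1+τ) + σ²I)⁻¹} admits a unique positive solution τ̄. -/
open Matrix Set
open scoped ComplexOrder

/-!
Diagonalising `R = U diag(λ) U*` turns the trace into `∑ λᵢ / (α₀ λᵢ / (1 + τ) + σ²)`. As a
function of `τ > 0` this right-hand side is continuous and stays between two positive constants,
so it crosses the identity (intermediate value theorem). Dividing by `τ` gives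
`(α₀ / K) ∑ λᵢ / (α₀ λᵢ τ / (1 + τ) + σ² τ)`, whose denominators increase strictly, so it is strictly
decreasing and takes the value `1` at most once.
-/

lemma existsUnique_pos_eq_of_bounded_of_strictAntiOn_div {h : ℝ → ℝ} {A B : ℝ} (hA : 0 < A)
    (hlow : ∀ τ > 0, A ≤ h τ) (hup : ∀ τ > 0, h τ ≤ B) (hcont : ContinuousOn h (Ioi 0))
    (hanti : StrictAntiOn (fun τ ↦ h τ / τ) (Ioi 0)) :
    ∃! τ, 0 < τ ∧ τ = h τ := by
  have hAB : A ≤ B := (hlow 1 one_pos).trans (hup 1 one_pos)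
  have hIcc : Icc A B ⊆ Ioi 0 := fun τ hτ ↦ hA.trans_le hτ.1
  obtain ⟨τ, hτ, hτh⟩ := intermediate_value_Icc' hAB ((hcont.mono hIcc).sub continuousOn_id)
    ⟨sub_nonpos.2 (hup B (hA.trans_le hAB)), sub_nonneg.2 (hlow A hA)⟩
  have hτ0 : 0 < τ := hIcc hτ
  have hτfix : τ = h τ := (sub_eq_zero.1 hτh).symm
  refine ⟨τ, ⟨hτ0, hτfix⟩, fun t ⟨ht, htfix⟩ ↦ hanti.injOn ht hτ0 ?_⟩
  simp only [← htfix, ← hτfix, div_self ht.ne', div_self hτ0.ne']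

lemma strictMonoOn_mul_div_one_add_mul_add {α σ l : ℝ} (hα : 0 ≤ α) (hσ : 0 < σ) (hl : 0 ≤ l) :
    StrictMonoOn (fun τ ↦ τ * (α / (1 + τ) * l + σ)) (Ioi 0) := by
  intro a ha b hb hab
  have ha' : (0 : ℝ) < 1 + a := by linarith [mem_Ioi.1 ha]
  have hb' : (0 : ℝ) < 1 + b := by linarith [mem_Ioi.1 hb]
  have hsplit : ∀ t : ℝ, 0 < 1 + t → t * (α / (1 + t) * l + σ) = α * l - α / (1 + t) * l + σ * t :=
    fun t ht ↦ by field_simp; ring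
  have hanti : α / (1 + b) ≤ α / (1 + a) := div_le_div_of_nonneg_left hα ha' (by linarith)
  simp only [hsplit a ha', hsplit b hb']
  nlinarith [mul_le_mul_of_nonneg_right hanti hl]

theorem existsUnique_pos_eq_mul_sum_div {ι : Type*} [Fintype ι] {κ α σ : ℝ} {ev : ι → ℝ}
    (hκ : 0 < κ) (hα : 0 ≤ α) (hσ : 0 < σ) (hev : ∀ i, 0 ≤ ev i) (hpos : ∃ i, 0 < ev i) :
    ∃! τ, 0 < τ ∧ τ = κ * ∑ i, ev i / (α / (1 + τ) * ev i + σ) := by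
  obtain ⟨j, hj⟩ := hpos
  have hden : ∀ i, ∀ τ > (0 : ℝ), 0 < α / (1 + τ) * ev i + σ := fun i τ hτ ↦ by
    have := hev i; positivity
  have hterm : ∀ i, ∀ τ > (0 : ℝ), 0 ≤ ev i / (α / (1 + τ) * ev i + σ) := fun i τ hτ ↦
    div_nonneg (hev i) (hden i τ hτ).le
  refine existsUnique_pos_eq_of_bounded_of_strictAntiOn_div
    (A := κ * (ev j / (α * ev j + σ))) (B := κ * ∑ i, ev i / σ) (by positivity)
    (fun τ hτ ↦ ?_) (fun τ hτ ↦ ?_) ?_ ?_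
  · gcongr κ * ?_
    calc ev j / (α * ev j + σ) ≤ ev j / (α / (1 + τ) * ev j + σ) := by
          gcongr
          exact div_le_self hα (by linarith)
      _ ≤ _ := Finset.single_le_sum (fun i _ ↦ hterm i τ hτ) (Finset.mem_univ j)
  · gcongr κ * ?_
    refine Finset.sum_le_sum fun i _ ↦ div_le_div_of_nonneg_left (hev i) hσ ?_
    have := hev i
    have : 0 ≤ α / (1 + τ) * ev i := by positivity
    linarith
  · refine ContinuousOn.mul continuousOn_const (continuousOn_finsetSum _ fun i _ ↦ ?_)
    refine continuousOn_const.div ?_ fun τ hτ ↦ (hden i τ hτ).ne'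
    fun_prop (disch := intro τ hτ; simp only [mem_Ioi] at hτ; positivity)
  · intro a ha b hb hab
    have hrw : ∀ τ, κ * (∑ i, ev i / (α / (1 + τ) * ev i + σ)) / τ
        = κ * ∑ i, ev i / (τ * (α / (1 + τ) * ev i + σ)) := fun τ ↦ by
      simp only [mul_div_assoc, Finset.sum_div, div_div, mul_comm τ]
    have hD := fun i ↦ strictMonoOn_mul_div_one_add_mul_add hα hσ (hev i) ha hb hab
    have hDa : ∀ i, 0 < a * (α / (1 + a) * ev i + σ) := fun i ↦ mul_pos ha (hden i a ha)
    simp only [hrw]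
    gcongr κ * ?_
    exact Finset.sum_lt_sum (fun i _ ↦ div_le_div_of_nonneg_left (hev i) (hDa i) (hD i).le)
      ⟨j, Finset.mem_univ j, div_lt_div_of_pos_left hj (hDa j) (hD j)⟩

namespace Matrix.IsHermitian
variable {n 𝕜 : Type*} [Fintype n] [DecidableEq n] [RCLike 𝕜] {A : Matrix n n 𝕜}

lemma trace_cfc (hA : A.IsHermitian) (f : ℝ → ℝ) :
    (cfc f A).trace = ∑ i, (f (hA.eigenvalues i) : 𝕜) := by
  rw [hA.cfc_eq, IsHermitian.cfc, Unitary.conjStarAlgAut_apply, trace_mul_cycle,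
    Unitary.coe_star_mul_self, one_mul, trace_diagonal]
  rfl

lemma mul_inv_smul_add_smul_one_eq_cfc (hA : A.IsHermitian) {c σ : ℝ}
    (h : ∀ i, c * hA.eigenvalues i + σ ≠ 0) :
    A * (c • A + σ • 1)⁻¹ = cfc (fun x ↦ x / (c * x + σ)) A := by
  have hA' : IsSelfAdjoint A := hA
  rw [cfc_map_div _ _ _ ?_, cfc_id' ℝ A, cfc_add_const σ (c * ·) A, cfc_const_mul_id c A,
    nonsing_inv_eq_ringInverse, Algebra.algebraMap_eq_smul_one]
  rw [hA.spectrum_real_eq_range_eigenvalues]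
  rintro - ⟨i, rfl⟩
  exact h i

end Matrix.IsHermitian

theorem stmt3 (M K : ℕ) (hK : 1 ≤ K)
    (R : Matrix (Fin M) (Fin M) ℂ) (hR : R.PosSemidef) (hR0 : R ≠ 0)
    (σ2 α0 : ℝ) (hσ : 0 < σ2) (hα : 0 < α0) :
    ∃! τ : ℝ, 0 < τ ∧
      τ = (α0 / K : ℝ) * (Matrix.trace (R *
        ((α0 / (1 + τ)) • R + σ2 • (1 : Matrix (Fin M) (Fin M) ℂ))⁻¹)).re := by
  set ev := hR.isHermitian.eigenvalues
  have hev : ∀ i, 0 ≤ ev i := hR.eigenvalues_nonneg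
  have hpos : ∃ i, 0 < ev i := by
    obtain ⟨i, hi⟩ := Function.ne_iff.1 (hR.isHermitian.eigenvalues_eq_zero_iff.not.2 hR0)
    exact ⟨i, (hev i).lt_of_ne' hi⟩
  have htrace : ∀ τ > (0 : ℝ), (Matrix.trace (R *
      ((α0 / (1 + τ)) • R + σ2 • (1 : Matrix (Fin M) (Fin M) ℂ))⁻¹)).re
        = ∑ i, ev i / (α0 / (1 + τ) * ev i + σ2) := fun τ hτ ↦ by
    have hden : ∀ i, α0 / (1 + τ) * ev i + σ2 ≠ 0 := fun i ↦ by have := hev i; positivity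
    rw [hR.isHermitian.mul_inv_smul_add_smul_one_eq_cfc hden, hR.isHermitian.trace_cfc,
      ← RCLike.ofReal_sum]
    exact Complex.ofReal_re _
  refine (existsUnique_congr fun τ ↦ and_congr_right fun hτ ↦ by rw [htrace τ hτ]).2 ?_
  exact existsUnique_pos_eq_mul_sum_div (div_pos hα (Nat.cast_pos.2 hK)) hα.le hσ hev hpos
end

section
/- Let h: ℝ_{≥0}^K → ℝ_{>0}^K be a standard interference function, i.e., h is positive, monotone (d ≤ d' componentwise implies h(d) ≤ h(d')), and scalable (for all λ > 1, λ·h(d) > h(λd) componentwise). If the fixed point equation d = h(d) has a solution, then the solution is unique. -/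
lemma aux6 (K : ℕ) (h : (Fin K → ℝ) → (Fin K → ℝ))
    (hpos : ∀ d : Fin K → ℝ, (∀ k, 0 ≤ d k) → ∀ k, 0 < h d k)
    (hmono : ∀ d d' : Fin K → ℝ, (∀ k, 0 ≤ d k) → (∀ k, 0 ≤ d' k) →
      d ≤ d' → h d ≤ h d')
    (hscale : ∀ l : ℝ, 1 < l → ∀ d : Fin K → ℝ, (∀ k, 0 ≤ d k) →
      ∀ k, h (l • d) k < l * h d k)
    (x y : Fin K → ℝ) (hx0 : ∀ k, 0 ≤ x k) (hy0 : ∀ k, 0 ≤ y k)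
    (hx : x = h x) (hy : y = h y) : y ≤ x := by
  rcases Nat.eq_zero_or_pos K with hK | hK
  · subst hK; intro k; exact absurd k.2 (by omega)
  haveI : NeZero K := ⟨hK.ne'⟩
  have hne : (Finset.univ : Finset (Fin K)).Nonempty := ⟨⟨0, hK⟩, Finset.mem_univ _⟩
  have hxpos : ∀ k, 0 < x k := fun k => hx ▸ hpos x hx0 k
  set l : ℝ := Finset.univ.sup' hne (fun k => y k / x k) with hl
  have hle : ∀ k, y k ≤ l * x k := by
    intro k
    have : y k / x k ≤ l := hl ▸ Finset.le_sup' (fun k => y k / x k) (Finset.mem_univ k)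
    calc y k = (y k / x k) * x k := by rw [div_mul_cancel₀]; exact (hxpos k).ne'
    _ ≤ l * x k := by nlinarith [hxpos k]
  obtain ⟨k₀, -, hk₀⟩ := Finset.exists_mem_eq_sup' hne (fun k => y k / x k)
  have hl0 : 0 ≤ l := le_trans (div_nonneg (hy0 ⟨0, hK⟩) (hx0 ⟨0, hK⟩)) (hl ▸ Finset.le_sup' (fun k => y k / x k) (Finset.mem_univ ⟨0, hK⟩))
  by_cases hl1 : l ≤ 1
  · intro k
    calc y k ≤ l * x k := hle k
    _ ≤ 1 * x k := by nlinarith [hxpos k]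
    _ = x k := one_mul _
  · exfalso
    push_neg at hl1
    have hyk : y k₀ = l * x k₀ := by
      rw [hl, hk₀, div_mul_cancel₀ _ (hxpos k₀).ne']
    have h1 : y ≤ l • x := by intro k; simpa using hle k
    have h2 : h y ≤ h (l • x) := hmono y (l • x) hy0 (fun k => by
      simpa using mul_nonneg hl0 (hx0 k)) h1
    have h3 : h (l • x) k₀ < l * h x k₀ := hscale l hl1 x hx0 k₀
    have := h2 k₀
    rw [← hy, ← hx] at *
    nlinarith [hyk]

theorem stmt6 (K : ℕ) (h : (Fin K → ℝ) → (Fin K → ℝ))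
    (hpos : ∀ d : Fin K → ℝ, (∀ k, 0 ≤ d k) → ∀ k, 0 < h d k)
    (hmono : ∀ d d' : Fin K → ℝ, (∀ k, 0 ≤ d k) → (∀ k, 0 ≤ d' k) →
      d ≤ d' → h d ≤ h d')
    (hscale : ∀ l : ℝ, 1 < l → ∀ d : Fin K → ℝ, (∀ k, 0 ≤ d k) →
      ∀ k, h (l • d) k < l * h d k)
    (x y : Fin K → ℝ) (hx0 : ∀ k, 0 ≤ x k) (hy0 : ∀ k, 0 ≤ y k)
    (hx : x = h x) (hy : y = h y) : x = y := by
  exact le_antisymm (aux6 K h hpos hmono hscale y x hy0 hx0 hy hx)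
    (aux6 K h hpos hmono hscale x y hx0 hy0 hx hy)
end

section
/- Let x ∈ (0,∞)^K satisfy x_k = h_k(x) for a standard interference function h, and let y ∈ (0,∞)^K satisfy y_k ≥ h_k(y) for all k (y is feasible). Then x ≤ y componentwise. -/
theorem stmt9 (K : ℕ) (h : (Fin K → ℝ) → (Fin K → ℝ))
    (hpos : ∀ d : Fin K → ℝ, (∀ k, 0 < d k) → ∀ k, 0 < h d k)
    (hmono : ∀ d d' : Fin K → ℝ, (∀ k, 0 < d k) → (∀ k, 0 < d' k) →
      d ≤ d' → h d ≤ h d')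
    (hscale : ∀ l : ℝ, 1 < l → ∀ d : Fin K → ℝ, (∀ k, 0 < d k) →
      ∀ k, h (l • d) k < l * h d k)
    (x y : Fin K → ℝ) (hx0 : ∀ k, 0 < x k) (hy0 : ∀ k, 0 < y k)
    (hx : ∀ k, x k = h x k) (hy : ∀ k, h y k ≤ y k) : x ≤ y := by
  by_contra hcon
  rw [Pi.le_def] at hcon
  push_neg at hcon
  obtain ⟨k0, hk0⟩ := hcon
  haveI : Nonempty (Fin K) := ⟨k0⟩
  set l : ℝ := Finset.univ.sup' Finset.univ_nonempty (fun k => x k / y k) with hl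
  have hle : ∀ k, x k / y k ≤ l := fun k =>
    Finset.le_sup' (fun k => x k / y k) (Finset.mem_univ k)
  have hl1 : 1 < l := by
    have := hle k0
    have h1 : 1 < x k0 / y k0 := (one_lt_div (hy0 k0)).mpr hk0
    linarith
  have hxly : x ≤ l • y := by
    intro k
    have := hle k
    have := (div_le_iff₀ (hy0 k)).mp this
    simpa [smul_eq_mul, mul_comm] using this
  obtain ⟨ks, -, hks⟩ := Finset.exists_mem_eq_sup' Finset.univ_nonempty
    (fun k => x k / y k)
  have hks' : x ks = l * y ks := by
    have : x ks / y ks = l := hks.symm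
    have := (div_eq_iff (hy0 ks).ne').mp this
    linarith
  have hly0 : ∀ k, 0 < (l • y) k := fun k => by
    have := hy0 k
    have : (0:ℝ) < l * y k := mul_pos (by linarith) this
    simpa [smul_eq_mul] using this
  have c1 : x ks ≤ h (l • y) ks := by
    rw [hx ks]
    exact hmono x (l • y) hx0 hly0 hxly ks
  have c2 : h (l • y) ks < l * h y ks := hscale l hl1 y hy0 ks
  have c3 : l * h y ks ≤ l * y ks :=
    mul_le_mul_of_nonneg_left (hy ks) (by linarith)
  rw [← hks'] at c3
  linarith
end
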